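/- Let R be an associative ring with unity. Suppose a left R-module M admits an exact sequence ··· → D₁ → D₀ → D₋₁ → D₋₂ → ··· of Ding projective modules with M ≅ ker(D₀ → D₋₁) such that Hom_R(−, H) leaves the sequence exact for every Gorenstein flat (equivalently, Ding flat) left R-module H. Then M is Ding projective; conversely every Ding projective module admits such a sequence. -/

import Mathlib

/-!
A Ding projective `M` is a cycle of the complex `⋯ → M → M → M → ⋯` whose maps are alternately
`id` and `0`. Conversely, flat modules are Gorenstein flat, so the hypothesis makes `M` a cycle of
an exact complex of Ding projective modules that stays exact under `Hom_R(-, F)` for flat `F`, and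
it remains to see that such a cycle is Ding projective.

Let `𝒩` be the closure under extensions of these cycles. Every module of `𝒩` has a proper
presentation `0 → Z → Q → X → 0` and a proper copresentation `0 → X → Q → Z → 0` (proper: exact
under `Hom_R(-, flat)`) with `Q` projective and `Z ∈ 𝒩`. For a cycle, compose its (co)presentation
by a Ding projective module with a projective (co)presentation of the latter; for extensions, use
the horseshoe lemma and its dual, the dual one relying on `Ext¹(𝒩, projective) = 0` (projective
modules are flat). Splicing these (co)presentations gives a complete projective resolution of `M`
that is exact under `Hom_R(-, flat)`.
-/

universe u

open scoped TensorProduct DirectSum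

/-- The subgroup of `E ⊗[ℤ] F` by which one quotients to obtain the balanced tensor
product `E ⊗_R F` of a right `R`-module `E` and a left `R`-module `F`. -/
def balancedSub (R : Type u) [Ring R] (E F : Type u) [AddCommGroup E] [Module Rᵐᵒᵖ E]
    [AddCommGroup F] [Module R F] : Submodule ℤ (TensorProduct ℤ E F) :=
  Submodule.span ℤ
    {x | ∃ (r : R) (e : E) (f : F),
      x = (MulOpposite.op r • e) ⊗ₜ[ℤ] f - e ⊗ₜ[ℤ] (r • f)}

/-- The tensor product `E ⊗_R F` of a right `R`-module `E` and a left `R`-module `F`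
over a possibly noncommutative ring `R`, realized as a quotient of `E ⊗[ℤ] F`. -/
def ModTensor (R : Type u) [Ring R] (E F : Type u) [AddCommGroup E] [Module Rᵐᵒᵖ E]
    [AddCommGroup F] [Module R F] : Type u :=
  TensorProduct ℤ E F ⧸ balancedSub R E F

noncomputable instance (R : Type u) [Ring R] (E F : Type u) [AddCommGroup E] [Module Rᵐᵒᵖ E]
    [AddCommGroup F] [Module R F] : AddCommGroup (ModTensor R E F) :=
  inferInstanceAs (AddCommGroup (TensorProduct ℤ E F ⧸ balancedSub R E F))

/-- The map `E ⊗_R F → E' ⊗_R F` induced by a map `g : E → E'` of right `R`-modules. -/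
noncomputable def ModTensor.mapLeft (R : Type u) [Ring R] {E E' : Type u} [AddCommGroup E]
    [Module Rᵐᵒᵖ E] [AddCommGroup E'] [Module Rᵐᵒᵖ E'] (F : Type u) [AddCommGroup F]
    [Module R F] (g : E →ₗ[Rᵐᵒᵖ] E') : ModTensor R E F →ₗ[ℤ] ModTensor R E' F :=
  Submodule.mapQ (balancedSub R E F) (balancedSub R E' F)
    (TensorProduct.map (g.restrictScalars ℤ) LinearMap.id)
    (by
      rw [balancedSub, Submodule.span_le]
      rintro x ⟨r, e, f, rfl⟩
      refine Submodule.subset_span ⟨r, g e, f, ?_⟩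
      have h : TensorProduct.map (g.restrictScalars ℤ) (LinearMap.id : F →ₗ[ℤ] F)
          ((MulOpposite.op r • e) ⊗ₜ[ℤ] f - e ⊗ₜ[ℤ] (r • f)) =
          (MulOpposite.op r • g e) ⊗ₜ[ℤ] f - g e ⊗ₜ[ℤ] (r • f) := by
        simp [map_sub, TensorProduct.map_tmul, map_smul]
      exact h)

/-- The map `E ⊗_R F → E ⊗_R F'` induced by a map `f : F → F'` of left `R`-modules. -/
noncomputable def ModTensor.mapRight (R : Type u) [Ring R] (E : Type u) [AddCommGroup E]
    [Module Rᵐᵒᵖ E] {F F' : Type u} [AddCommGroup F] [Module R F] [AddCommGroup F']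
    [Module R F'] (f : F →ₗ[R] F') : ModTensor R E F →ₗ[ℤ] ModTensor R E F' :=
  Submodule.mapQ (balancedSub R E F) (balancedSub R E F')
    (TensorProduct.map LinearMap.id (f.restrictScalars ℤ))
    (by
      rw [balancedSub, Submodule.span_le]
      rintro x ⟨r, e, y, rfl⟩
      refine Submodule.subset_span ⟨r, e, f y, ?_⟩
      have h : TensorProduct.map (LinearMap.id : E →ₗ[ℤ] E) (f.restrictScalars ℤ)
          ((MulOpposite.op r • e) ⊗ₜ[ℤ] y - e ⊗ₜ[ℤ] (r • y)) =
          (MulOpposite.op r • e) ⊗ₜ[ℤ] f y - e ⊗ₜ[ℤ] (r • f y) := by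
        simp [map_sub, TensorProduct.map_tmul, map_smul]
      exact h)

/-- A left module `F` over a (possibly noncommutative) ring `R` is flat if tensoring
with `F` preserves injectivity of maps of right `R`-modules. -/
def IsFlatModule (R : Type u) [Ring R] (F : Type u) [AddCommGroup F] [Module R F] : Prop :=
  ∀ (E E' : Type u) [AddCommGroup E] [Module Rᵐᵒᵖ E] [AddCommGroup E'] [Module Rᵐᵒᵖ E']
    (g : E →ₗ[Rᵐᵒᵖ] E'), Function.Injective g →
      Function.Injective (ModTensor.mapLeft R F g)

/-- `Ext^i_R(M, L) = 0`, expressed using the `Ext` functor on the category of left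
`R`-modules (with its `ℤ`-linear structure). -/
def ExtIsZero (R : Type u) [Ring R] (i : ℕ) (M L : Type u) [AddCommGroup M] [Module R M]
    [AddCommGroup L] [Module R L] : Prop :=
  Subsingleton ((((_root_.Ext ℤ (ModuleCat.{u} R) i).obj
    (Opposite.op (ModuleCat.of R M))).obj (ModuleCat.of R L)) : Type u)

/-- `FlatDimLE R n L` means the left `R`-module `L` admits a flat resolution of
length at most `n`. -/
def FlatDimLE (R : Type u) [Ring R] : ℕ → ModuleCat.{u} R → Prop
  | 0, L => IsFlatModule R L
  | n + 1, L =>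
    ∃ (F K : ModuleCat.{u} R) (ι : (K : Type u) →ₗ[R] F) (π : (F : Type u) →ₗ[R] L),
      IsFlatModule R F ∧ Function.Injective ι ∧ Function.Surjective π ∧
      Function.Exact ι π ∧ FlatDimLE R n K

/-- A left `R`-module `L` has finite flat dimension if it admits a finite resolution
by flat modules. -/
def HasFiniteFlatDimension (R : Type u) [Ring R] (L : Type u) [AddCommGroup L]
    [Module R L] : Prop :=
  ∃ n : ℕ, FlatDimLE R n (ModuleCat.of R L)

/-- A left `R`-module `M` is Ding projective if there is an exact sequence
`⋯ → P₁ → P₀ → P₋₁ → P₋₂ → ⋯` of projective modules with `M ≅ ker (P₀ → P₋₁)`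
which stays exact under `Hom_R(-, F)` for every flat module `F`. -/
def IsDingProjective (R : Type u) [Ring R] (M : Type u) [AddCommGroup M] [Module R M] : Prop :=
  ∃ (P : ℤ → ModuleCat.{u} R) (d : ∀ n : ℤ, (P (n + 1) : Type u) →ₗ[R] P n),
    (∀ n, Module.Projective R (P n)) ∧
    (∀ n, Function.Exact (d (n + 1)) (d n)) ∧
    (∀ (F : Type u) [AddCommGroup F] [Module R F], IsFlatModule R F →
      ∀ n : ℤ, Function.Exact
        (fun g : (P n : Type u) →ₗ[R] F => g ∘ₗ d n)
        (fun g : (P (n + 1) : Type u) →ₗ[R] F => g ∘ₗ d (n + 1))) ∧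
    Nonempty (M ≃ₗ[R] LinearMap.ker (d (-1)))

/-- A left `R`-module `M` is two-degree Ding projective if there is an exact sequence
`⋯ → D₁ → D₀ → D₋₁ → D₋₂ → ⋯` of Ding projective modules with `M ≅ ker (D₀ → D₋₁)`
which stays exact under `Hom_R(-, F)` for every flat module `F`. -/
def IsTwoDegreeDingProjective (R : Type u) [Ring R] (M : Type u) [AddCommGroup M]
    [Module R M] : Prop :=
  ∃ (D : ℤ → ModuleCat.{u} R) (d : ∀ n : ℤ, (D (n + 1) : Type u) →ₗ[R] D n),
    (∀ n, IsDingProjective R (D n)) ∧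
    (∀ n, Function.Exact (d (n + 1)) (d n)) ∧
    (∀ (F : Type u) [AddCommGroup F] [Module R F], IsFlatModule R F →
      ∀ n : ℤ, Function.Exact
        (fun g : (D n : Type u) →ₗ[R] F => g ∘ₗ d n)
        (fun g : (D (n + 1) : Type u) →ₗ[R] F => g ∘ₗ d (n + 1))) ∧
    Nonempty (M ≃ₗ[R] LinearMap.ker (d (-1)))

/-- A left `R`-module `M` is strongly two-degree Ding projective if there is an exact
sequence `⋯ →f D →f D →f D →f ⋯` with `D` Ding projective and a single map `f`, with
`M ≅ ker f`, which stays exact under `Hom_R(-, F)` for every flat module `F`. -/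
def IsStronglyTwoDegreeDingProjective (R : Type u) [Ring R] (M : Type u) [AddCommGroup M]
    [Module R M] : Prop :=
  ∃ (D : ModuleCat.{u} R) (f : (D : Type u) →ₗ[R] D),
    IsDingProjective R D ∧
    Function.Exact f f ∧
    (∀ (F : Type u) [AddCommGroup F] [Module R F], IsFlatModule R F →
      Function.Exact
        (fun g : (D : Type u) →ₗ[R] F => g ∘ₗ f)
        (fun g : (D : Type u) →ₗ[R] F => g ∘ₗ f)) ∧
    Nonempty (M ≃ₗ[R] LinearMap.ker f)

/-- A left `R`-module `M` is Gorenstein projective if there is an exact sequence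
`⋯ → P₁ → P₀ → P₋₁ → P₋₂ → ⋯` of projective modules with `M ≅ ker (P₀ → P₋₁)`
which stays exact under `Hom_R(-, Q)` for every projective module `Q`. -/
def IsGorensteinProjective (R : Type u) [Ring R] (M : Type u) [AddCommGroup M]
    [Module R M] : Prop :=
  ∃ (P : ℤ → ModuleCat.{u} R) (d : ∀ n : ℤ, (P (n + 1) : Type u) →ₗ[R] P n),
    (∀ n, Module.Projective R (P n)) ∧
    (∀ n, Function.Exact (d (n + 1)) (d n)) ∧
    (∀ (Q : Type u) [AddCommGroup Q] [Module R Q], Module.Projective R Q →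
      ∀ n : ℤ, Function.Exact
        (fun g : (P n : Type u) →ₗ[R] Q => g ∘ₗ d n)
        (fun g : (P (n + 1) : Type u) →ₗ[R] Q => g ∘ₗ d (n + 1))) ∧
    Nonempty (M ≃ₗ[R] LinearMap.ker (d (-1)))

/-- A left `R`-module `H` is Gorenstein flat if there is an exact sequence
`⋯ → F₁ → F₀ → F₋₁ → F₋₂ → ⋯` of flat modules with `H ≅ ker (F₀ → F₋₁)` which stays
exact under `E ⊗_R -` for every injective right `R`-module `E`. -/
def IsGorensteinFlat (R : Type u) [Ring R] (H : Type u) [AddCommGroup H] [Module R H] : Prop :=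
  ∃ (F : ℤ → ModuleCat.{u} R) (d : ∀ n : ℤ, (F (n + 1) : Type u) →ₗ[R] F n),
    (∀ n, IsFlatModule R (F n)) ∧
    (∀ n, Function.Exact (d (n + 1)) (d n)) ∧
    (∀ (E : Type u) [AddCommGroup E] [Module Rᵐᵒᵖ E], Module.Injective Rᵐᵒᵖ E →
      ∀ n : ℤ, Function.Exact
        (ModTensor.mapRight R E (d (n + 1)))
        (ModTensor.mapRight R E (d n))) ∧
    Nonempty (H ≃ₗ[R] LinearMap.ker (d (-1)))

/-- A left `R`-module `E` is FP-injective if `Ext¹_R(F, E) = 0` for every finitely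
presented module `F`. -/
def IsFPInjective (R : Type u) [Ring R] (E : Type u) [AddCommGroup E] [Module R E] : Prop :=
  ∀ (F : Type u) [AddCommGroup F] [Module R F], Module.FinitePresentation R F →
    ExtIsZero R 1 F E

/-- A left `R`-module `M` is Ding injective if there is an exact sequence
`⋯ → E₁ → E₀ → E₋₁ → E₋₂ → ⋯` of injective modules with `M ≅ ker (E₀ → E₋₁)`
which stays exact under `Hom_R(H, -)` for every FP-injective module `H`. -/
def IsDingInjective (R : Type u) [Ring R] (M : Type u) [AddCommGroup M] [Module R M] : Prop :=
  ∃ (E : ℤ → ModuleCat.{u} R) (d : ∀ n : ℤ, (E (n + 1) : Type u) →ₗ[R] E n),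
    (∀ n, Module.Injective R (E n)) ∧
    (∀ n, Function.Exact (d (n + 1)) (d n)) ∧
    (∀ (H : Type u) [AddCommGroup H] [Module R H], IsFPInjective R H →
      ∀ n : ℤ, Function.Exact
        (fun g : H →ₗ[R] (E (n + 1 + 1) : Type u) => d (n + 1) ∘ₗ g)
        (fun g : H →ₗ[R] (E (n + 1) : Type u) => d n ∘ₗ g)) ∧
    Nonempty (M ≃ₗ[R] LinearMap.ker (d (-1)))

/-- A left `R`-module `M` is two-degree Ding injective if there is an exact sequence
`⋯ → D₁ → D₀ → D₋₁ → D₋₂ → ⋯` of Ding injective modules with `M ≅ ker (D₀ → D₋₁)`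
which stays exact under `Hom_R(H, -)` for every FP-injective module `H`. -/
def IsTwoDegreeDingInjective (R : Type u) [Ring R] (M : Type u) [AddCommGroup M]
    [Module R M] : Prop :=
  ∃ (D : ℤ → ModuleCat.{u} R) (d : ∀ n : ℤ, (D (n + 1) : Type u) →ₗ[R] D n),
    (∀ n, IsDingInjective R (D n)) ∧
    (∀ n, Function.Exact (d (n + 1)) (d n)) ∧
    (∀ (H : Type u) [AddCommGroup H] [Module R H], IsFPInjective R H →
      ∀ n : ℤ, Function.Exact
        (fun g : H →ₗ[R] (D (n + 1 + 1) : Type u) => d (n + 1) ∘ₗ g)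
        (fun g : H →ₗ[R] (D (n + 1) : Type u) => d n ∘ₗ g)) ∧
    Nonempty (M ≃ₗ[R] LinearMap.ker (d (-1)))

section Exactness

variable {R : Type u} [Ring R] {A B C F : Type u} [AddCommGroup A] [Module R A]
  [AddCommGroup B] [Module R B] [AddCommGroup C] [Module R C] [AddCommGroup F] [Module R F]
  {i : A →ₗ[R] B} {p : B →ₗ[R] C}

theorem Function.Exact.exists_descend (h : Function.Exact i p) (hp : Function.Surjective p)
    (ψ : B →ₗ[R] F) (hψ : ψ ∘ₗ i = 0) : ∃ θ : C →ₗ[R] F, θ ∘ₗ p = ψ := by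
  refine ⟨(LinearMap.range i).liftQ ψ ?_ ∘ₗ (h.linearEquivOfSurjective hp).symm.toLinearMap, ?_⟩
  · rintro _ ⟨a, rfl⟩
    exact LinearMap.congr_fun hψ a
  · ext b
    simp

theorem Function.Exact.exists_lift (h : Function.Exact i p) (hi : Function.Injective i)
    (ψ : F →ₗ[R] B) (hψ : p ∘ₗ ψ = 0) : ∃ θ : F →ₗ[R] A, i ∘ₗ θ = ψ := by
  have hrange : ∀ x, ψ x ∈ LinearMap.range i := fun x => (h _).mp (LinearMap.congr_fun hψ x)
  refine ⟨(LinearEquiv.ofInjective i hi).symm.toLinearMap ∘ₗ ψ.codRestrict _ hrange, ?_⟩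
  ext x
  simp

end Exactness
namespace ModTensor

variable {R : Type u} [Ring R] {E E' F F' : Type u} [AddCommGroup E] [Module Rᵐᵒᵖ E]
  [AddCommGroup E'] [Module Rᵐᵒᵖ E'] [AddCommGroup F] [Module R F] [AddCommGroup F'] [Module R F']

def tmul (e : E) (f : F) : ModTensor R E F := Submodule.Quotient.mk (e ⊗ₜ f)

@[simp] theorem zero_tmul (f : F) : (tmul 0 f : ModTensor R E F) = 0 := by
  simp only [tmul, TensorProduct.zero_tmul]; rfl

theorem add_tmul (e e' : E) (f : F) :
    (tmul (e + e') f : ModTensor R E F) = tmul e f + tmul e' f := by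
  simp only [tmul, TensorProduct.add_tmul]; rfl

theorem tmul_sum {ι : Type*} (e : E) (f : ι → F) (t : Finset ι) :
    (tmul e (∑ i ∈ t, f i) : ModTensor R E F) = ∑ i ∈ t, tmul e (f i) := by
  simp only [tmul, TensorProduct.tmul_sum]
  exact map_sum (balancedSub R E F).mkQ _ _

theorem op_smul_tmul (r : R) (e : E) (f : F) :
    (tmul (MulOpposite.op r • e) f : ModTensor R E F) = tmul e (r • f) :=
  (Submodule.Quotient.eq _).mpr (Submodule.subset_span ⟨r, e, f, rfl⟩)

@[elab_as_elim]
theorem induction_on {motive : ModTensor R E F → Prop} (x : ModTensor R E F) (zero : motive 0)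
    (tmul : ∀ e f, motive (tmul e f)) (add : ∀ x y, motive x → motive y → motive (x + y)) :
    motive x := by
  obtain ⟨y, rfl⟩ := Submodule.Quotient.mk_surjective _ x
  induction y using TensorProduct.induction_on with
  | zero => exact zero
  | tmul e f => exact tmul e f
  | add y z hy hz => exact add _ _ hy hz

noncomputable def liftAddHom {G : Type*} [AddCommGroup G] (f : E →+ F →+ G)
    (hf : ∀ (r : R) e x, f (MulOpposite.op r • e) x = f e (r • x)) : ModTensor R E F →+ G :=
  ((balancedSub R E F).liftQ (TensorProduct.liftAddHom f (by intros; simp)).toIntLinearMap (by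
    rw [balancedSub, Submodule.span_le]
    rintro _ ⟨r, e, x, rfl⟩
    simp [hf])).toAddMonoidHom

@[simp] theorem mapLeft_tmul (g : E →ₗ[Rᵐᵒᵖ] E') (e : E) (x : F) :
    mapLeft R F g (tmul e x) = tmul (g e) x :=
  rfl

theorem mapRight_id : mapRight R E (LinearMap.id : F →ₗ[R] F) = LinearMap.id := by
  apply Submodule.linearMap_qext
  apply TensorProduct.ext'
  intro e f
  rfl

theorem mapRight_zero : mapRight R E (0 : F →ₗ[R] F') = 0 := by
  apply Submodule.linearMap_qext
  apply TensorProduct.ext'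
  intro e f
  simp only [mapRight, LinearMap.restrictScalars_zero, TensorProduct.map_zero_right]
  rfl

end ModTensor

section ProjectiveFlat

variable {R : Type u} [Ring R] {P : Type u} [AddCommGroup P] [Module R P]
  (s : P →ₗ[R] P →₀ R) (E : Type u) [AddCommGroup E] [Module Rᵐᵒᵖ E]

namespace ModTensor

noncomputable def toFinsupp : ModTensor R E P →+ (P →₀ E) :=
  liftAddHom
    { toFun e := (Finsupp.mapRange.addMonoidHom ((smulAddHom Rᵐᵒᵖ E).flip e |>.comp
        (MulOpposite.opAddEquiv : R ≃+ Rᵐᵒᵖ).toAddMonoidHom)).comp s.toAddMonoidHom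
      map_zero' := by ext; simp
      map_add' _ _ := by ext; simp }
    (by intro r e p; ext q; simp [mul_smul])

theorem toFinsupp_tmul (e : E) (p : P) :
    toFinsupp s E (tmul e p) = (s p).mapRange (fun r => MulOpposite.op r • e) (by simp) :=
  rfl

noncomputable def ofFinsupp : (P →₀ E) →+ ModTensor R E P :=
  Finsupp.liftAddHom fun q =>
    { toFun := fun e => tmul e q
      map_zero' := zero_tmul q
      map_add' := fun e e' => add_tmul e e' q }

theorem ofFinsupp_toFinsupp (hs : Finsupp.linearCombination R id ∘ₗ s = LinearMap.id)
    (x : ModTensor R E P) : ofFinsupp E (toFinsupp s E x) = x := by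
  induction x using induction_on with
  | zero => simp
  | tmul e p =>
    have hp : (s p).sum (fun q r => r • q) = p := LinearMap.congr_fun hs p
    conv_rhs => rw [← hp, Finsupp.sum, tmul_sum]
    rw [toFinsupp_tmul, ofFinsupp, Finsupp.liftAddHom_apply,
      Finsupp.sum_mapRange_index fun _ => zero_tmul _]
    simp [Finsupp.sum, op_smul_tmul]
  | add x y hx hy => simp [hx, hy]

theorem toFinsupp_mapLeft {E' : Type u} [AddCommGroup E'] [Module Rᵐᵒᵖ E'] (g : E →ₗ[Rᵐᵒᵖ] E')
    (x : ModTensor R E P) :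
    toFinsupp s E' (mapLeft R P g x) = Finsupp.mapRange g (map_zero g) (toFinsupp s E x) := by
  induction x using induction_on with
  | zero => simp
  | tmul e p => ext q; simp [toFinsupp_tmul]
  | add x y hx hy => simp [hx, hy, Finsupp.mapRange_add (map_add g)]

end ModTensor

theorem isFlatModule_of_projective [Module.Projective R P] : IsFlatModule R P := by
  intro E E' _ _ _ _ g hg
  obtain ⟨s, hs⟩ := Module.projective_def'.mp ‹Module.Projective R P›
  rw [injective_iff_map_eq_zero]
  intro x hx
  have hx' : ModTensor.toFinsupp s E x = 0 := Finsupp.mapRange_injective g (map_zero g) hg (by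
    rw [← ModTensor.toFinsupp_mapLeft, hx]; simp)
  rw [← ModTensor.ofFinsupp_toFinsupp s E hs x, hx', map_zero]

end ProjectiveFlat

section Alternating

variable (R : Type u) [Ring R] (A : Type u) [AddCommGroup A] [Module R A]

noncomputable def alternatingDiff (n : ℤ) : A →ₗ[R] A :=
  if Even n then LinearMap.id else 0

variable {R A}

theorem alternatingDiff_cases (n : ℤ) :
    (alternatingDiff R A (n + 1) = 0 ∧ alternatingDiff R A n = LinearMap.id) ∨
      (alternatingDiff R A (n + 1) = LinearMap.id ∧ alternatingDiff R A n = 0) := by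
  rcases Int.even_or_odd n with h | h
  · exact .inl ⟨if_neg (by simpa [Int.even_add_one] using h), if_pos h⟩
  · exact .inr ⟨if_pos (by simpa [Int.even_add_one] using h), if_neg (Int.not_even_iff_odd.mpr h)⟩

theorem alternatingDiff_exact (n : ℤ) :
    Function.Exact (alternatingDiff R A (n + 1)) (alternatingDiff R A n) := by
  rcases alternatingDiff_cases (R := R) (A := A) n with ⟨h₁, h₂⟩ | ⟨h₁, h₂⟩ <;> rw [h₁, h₂]
  · exact (LinearMap.exact_zero_iff_injective A _).mpr Function.injective_id
  · exact (LinearMap.exact_zero_iff_surjective A _).mpr Function.surjective_id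

theorem alternatingDiff_comp_exact (H : Type u) [AddCommGroup H] [Module R H] (n : ℤ) :
    Function.Exact (fun g : A →ₗ[R] H => g ∘ₗ alternatingDiff R A n)
      (fun g : A →ₗ[R] H => g ∘ₗ alternatingDiff R A (n + 1)) := by
  rcases alternatingDiff_cases (R := R) (A := A) n with ⟨h₁, h₂⟩ | ⟨h₁, h₂⟩ <;>
    rw [h₁, h₂] <;> intro g <;> simp

theorem alternatingDiff_mapRight_exact (E : Type u) [AddCommGroup E] [Module Rᵐᵒᵖ E] (n : ℤ) :
    Function.Exact (ModTensor.mapRight R E (alternatingDiff R A (n + 1)))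
      (ModTensor.mapRight R E (alternatingDiff R A n)) := by
  rcases alternatingDiff_cases (R := R) (A := A) n with ⟨h₁, h₂⟩ | ⟨h₁, h₂⟩ <;>
    rw [h₁, h₂, ModTensor.mapRight_id, ModTensor.mapRight_zero]
  · exact (LinearMap.exact_zero_iff_injective _ _).mpr Function.injective_id
  · exact (LinearMap.exact_zero_iff_surjective _ _).mpr Function.surjective_id

noncomputable def equivKerAlternatingDiff : A ≃ₗ[R] LinearMap.ker (alternatingDiff R A (-1)) :=
  (LinearEquiv.ofTop _ (by simp [alternatingDiff])).symm

end Alternating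

theorem isDingProjective_of_projective {R : Type u} [Ring R] (P : Type u) [AddCommGroup P]
    [Module R P] [Module.Projective R P] : IsDingProjective R P :=
  ⟨fun _ => ModuleCat.of R P, alternatingDiff R P, fun _ => ‹_›, alternatingDiff_exact,
    fun F _ _ _ => alternatingDiff_comp_exact F, ⟨equivKerAlternatingDiff⟩⟩

theorem isGorensteinFlat_of_isFlatModule {R : Type u} [Ring R] (F : Type u) [AddCommGroup F]
    [Module R F] (hF : IsFlatModule R F) : IsGorensteinFlat R F :=
  ⟨fun _ => ModuleCat.of R F, alternatingDiff R F, fun _ => hF, alternatingDiff_exact,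
    fun E _ _ _ => alternatingDiff_mapRight_exact E, ⟨equivKerAlternatingDiff⟩⟩

section ProperSequences

variable {R : Type u} [Ring R] {A B C D K M : Type u} [AddCommGroup A] [Module R A]
  [AddCommGroup B] [Module R B] [AddCommGroup C] [Module R C] [AddCommGroup D] [Module R D]
  [AddCommGroup K] [Module R K] [AddCommGroup M] [Module R M]

def ExtendsFlatMaps (i : A →ₗ[R] B) : Prop :=
  ∀ (F : Type u) [AddCommGroup F] [Module R F], IsFlatModule R F →
    ∀ φ : A →ₗ[R] F, ∃ h : B →ₗ[R] F, h ∘ₗ i = φ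

structure IsShortExact (i : A →ₗ[R] B) (p : B →ₗ[R] C) : Prop where
  injective : Function.Injective i
  exact : Function.Exact i p
  surjective : Function.Surjective p

structure IsFlatProperShortExact (i : A →ₗ[R] B) (p : B →ₗ[R] C) : Prop
    extends IsShortExact i p where
  extendsFlatMaps : ExtendsFlatMaps i

variable (R) in
/-- `Ext¹_R(M, F) = 0` for every flat `F`, in the form: every short exact sequence ending in `M`
is `Hom_R(-, F)`-exact. -/
def ExtOneFlatVanishes (M : Type u) [AddCommGroup M] [Module R M] : Prop :=
  ∀ (A B : Type u) [AddCommGroup A] [Module R A] [AddCommGroup B] [Module R B]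
    (i : A →ₗ[R] B) (p : B →ₗ[R] M), IsShortExact i p → ExtendsFlatMaps i

theorem ExtendsFlatMaps.comp {i : A →ₗ[R] B} {j : B →ₗ[R] C} (hi : ExtendsFlatMaps i)
    (hj : ExtendsFlatMaps j) : ExtendsFlatMaps (j ∘ₗ i) := by
  intro F _ _ hF φ
  obtain ⟨g, rfl⟩ := hi F hF φ
  obtain ⟨h, rfl⟩ := hj F hF g
  exact ⟨h, rfl⟩

theorem extendsFlatMaps_of_comp_eq_id {i : A →ₗ[R] B} (ρ : B →ₗ[R] A)
    (hρ : ρ ∘ₗ i = LinearMap.id) : ExtendsFlatMaps i :=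
  fun _ _ _ _ φ => ⟨φ ∘ₗ ρ, by rw [LinearMap.comp_assoc, hρ, LinearMap.comp_id]⟩

namespace IsFlatProperShortExact

variable {i : A →ₗ[R] B} {p : B →ₗ[R] C}

theorem comp_linearEquiv (h : IsFlatProperShortExact i p) (e : C ≃ₗ[R] D) :
    IsFlatProperShortExact i (e.toLinearMap ∘ₗ p) :=
  ⟨⟨h.injective, LinearEquiv.postcomp_exact_iff_exact.mpr h.exact,
    e.surjective.comp h.surjective⟩, h.extendsFlatMaps⟩

theorem linearEquiv_comp (h : IsFlatProperShortExact i p) (e : D ≃ₗ[R] A) :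
    IsFlatProperShortExact (i ∘ₗ e.toLinearMap) p := by
  refine ⟨⟨h.injective.comp e.injective, LinearEquiv.precomp_exact_iff_exact.mpr h.exact,
    h.surjective⟩, fun F _ _ hF φ => ?_⟩
  obtain ⟨g, hg⟩ := h.extendsFlatMaps F hF (φ ∘ₗ e.symm.toLinearMap)
  exact ⟨g, by rw [← LinearMap.comp_assoc, hg, LinearMap.comp_assoc]; simp⟩

end IsFlatProperShortExact

theorem extOneFlatVanishes_of_projective [Module.Projective R M] : ExtOneFlatVanishes R M := by
  intro A B _ _ _ _ i p hip
  obtain ⟨σ, hσ⟩ := Module.projective_lifting_property p LinearMap.id hip.surjective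
  have hsplit := Function.Exact.split_tfae hip.exact hip.injective hip.surjective
  obtain ⟨ρ, hρ⟩ := (hsplit.out 0 1 rfl rfl).mp ⟨σ, hσ⟩
  exact extendsFlatMaps_of_comp_eq_id ρ hρ

theorem ExtOneFlatVanishes.of_isShortExact {k : A →ₗ[R] M} {r : M →ₗ[R] B}
    (hkr : IsShortExact k r) (hA : ExtOneFlatVanishes R A) (hB : ExtOneFlatVanishes R B) :
    ExtOneFlatVanishes R M := by
  intro C W _ _ _ _ i π hiπ F _ _ hF φ
  -- `π⁻¹(k A)` is an extension of `A` by `C`, and `W` one of `B` by `π⁻¹(k A)`.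
  set WA := LinearMap.ker (r ∘ₗ π)
  have hi : ∀ c, i c ∈ WA := fun c => by simp [WA, hiπ.exact.apply_apply_eq_zero]
  obtain ⟨t, ht⟩ := hkr.exact.exists_lift hkr.injective (π ∘ₗ WA.subtype)
    (by ext ⟨w, hw⟩; exact hw)
  have hWA : IsShortExact (i.codRestrict WA hi) t := by
    refine ⟨fun c c' hc => hiπ.injective (congrArg Subtype.val hc), fun z => ?_, fun a => ?_⟩
    · rw [← hkr.injective.eq_iff, map_zero, ← LinearMap.comp_apply, ht]
      refine (hiπ.exact z).trans ⟨fun ⟨c, hc⟩ => ⟨c, Subtype.ext hc⟩, fun ⟨c, hc⟩ => ⟨c, ?_⟩⟩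
      exact congrArg Subtype.val hc
    · obtain ⟨w, hw⟩ := hiπ.surjective (k a)
      refine ⟨⟨w, by simp [WA, hw, hkr.exact.apply_apply_eq_zero]⟩, hkr.injective ?_⟩
      rw [← LinearMap.comp_apply, ht]
      exact hw
  obtain ⟨φA, hφA⟩ := hA C WA _ t hWA F hF φ
  obtain ⟨h, hh⟩ := hB WA W WA.subtype (r ∘ₗ π)
    ⟨Submodule.injective_subtype _, LinearMap.exact_subtype_ker_map _,
      hkr.surjective.comp hiπ.surjective⟩ F hF φA
  exact ⟨h, by rw [← hφA, ← hh]; rfl⟩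

theorem ExtOneFlatVanishes.of_isFlatProperShortExact {k : K →ₗ[R] D} {r : D →ₗ[R] M}
    (hkr : IsFlatProperShortExact k r) (hD : ExtOneFlatVanishes R D) : ExtOneFlatVanishes R M := by
  intro A B _ _ _ _ i p hip F _ _ hF φ
  -- Pull the extension `B` of `M` back along `r` to an extension `Pb` of `D`.
  set Pb := LinearMap.ker (p.coprod (-r))
  have hmem : ∀ z : B × D, z ∈ Pb ↔ p z.1 = r z.2 := fun z => by
    simp [Pb, add_neg_eq_zero]
  let ιA : A →ₗ[R] Pb := (LinearMap.inl R B D ∘ₗ i).codRestrict Pb fun a => by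
    simp [hmem, hip.exact.apply_apply_eq_zero]
  let κ : K →ₗ[R] Pb := (LinearMap.inr R B D ∘ₗ k).codRestrict Pb fun x => by
    simp [hmem, hkr.exact.apply_apply_eq_zero]
  let πB : Pb →ₗ[R] B := LinearMap.fst R B D ∘ₗ Pb.subtype
  let πD : Pb →ₗ[R] D := LinearMap.snd R B D ∘ₗ Pb.subtype
  have hA : IsShortExact ιA πD := by
    refine ⟨fun a a' h => hip.injective (congrArg (fun z : Pb => z.1.1) h), ?_, fun d => ?_⟩
    · rintro ⟨⟨b, d⟩, hz⟩
      have hpb : p b = r d := (hmem _).mp hz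
      change d = 0 ↔ _
      refine ⟨?_, fun ⟨a, ha⟩ => congrArg (fun z : Pb => z.1.2) ha.symm⟩
      rintro rfl
      obtain ⟨a, rfl⟩ := (hip.exact b).mp (by rw [hpb, map_zero])
      exact ⟨a, rfl⟩
    · obtain ⟨b, hb⟩ := hip.surjective (r d)
      exact ⟨⟨(b, d), (hmem _).mpr hb⟩, rfl⟩
  have hK : IsShortExact κ πB := by
    refine ⟨fun x x' h => hkr.injective (congrArg (fun z : Pb => z.1.2) h), ?_, fun b => ?_⟩
    · rintro ⟨⟨b, d⟩, hz⟩
      have hpb : p b = r d := (hmem _).mp hz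
      change b = 0 ↔ _
      refine ⟨?_, fun ⟨x, hx⟩ => congrArg (fun z : Pb => z.1.1) hx.symm⟩
      rintro rfl
      obtain ⟨x, rfl⟩ := (hkr.exact d).mp (by rw [← hpb, map_zero])
      exact ⟨x, rfl⟩
    · obtain ⟨d, hd⟩ := hkr.surjective (p b)
      exact ⟨⟨(b, d), (hmem _).mpr hd.symm⟩, rfl⟩
  obtain ⟨ψ, hψ⟩ := hD A Pb ιA πD hA F hF φ
  obtain ⟨χ, hχ⟩ := hkr.extendsFlatMaps F hF (ψ ∘ₗ κ)
  obtain ⟨θ, hθ⟩ := hK.exact.exists_descend hK.surjective (ψ - χ ∘ₗ πD) (by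
    rw [LinearMap.sub_comp, LinearMap.comp_assoc, show πD ∘ₗ κ = k from rfl, hχ, sub_self])
  refine ⟨θ, ?_⟩
  rw [← hψ]
  ext a
  have h := LinearMap.congr_fun hθ (ιA a)
  simp only [LinearMap.sub_apply, LinearMap.comp_apply, show πD (ιA a) = 0 from rfl, map_zero,
    sub_zero] at h
  exact h

end ProperSequences

section Composites

variable {R : Type u} [Ring R] {A B C E S N Q X : Type u} [AddCommGroup A] [Module R A]
  [AddCommGroup B] [Module R B] [AddCommGroup C] [Module R C] [AddCommGroup E] [Module R E]
  [AddCommGroup S] [Module R S] [AddCommGroup N] [Module R N] [AddCommGroup Q] [Module R Q]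
  [AddCommGroup X] [Module R X]

theorem IsFlatProperShortExact.ker_comp {i₁ : S →ₗ[R] Q} {p₁ : Q →ₗ[R] E} {i₂ : A →ₗ[R] E}
    {p₂ : E →ₗ[R] X} (h₁ : IsFlatProperShortExact i₁ p₁) (h₂ : IsFlatProperShortExact i₂ p₂) :
    IsFlatProperShortExact (LinearMap.ker (p₂ ∘ₗ p₁)).subtype (p₂ ∘ₗ p₁) ∧
      ∃ (j : S →ₗ[R] LinearMap.ker (p₂ ∘ₗ p₁)) (t : LinearMap.ker (p₂ ∘ₗ p₁) →ₗ[R] A),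
        IsShortExact j t := by
  set K := LinearMap.ker (p₂ ∘ₗ p₁)
  let j : S →ₗ[R] K := i₁.codRestrict K fun s => by simp [K, h₁.exact.apply_apply_eq_zero]
  obtain ⟨t, ht⟩ := h₂.exact.exists_lift h₂.injective (p₁ ∘ₗ K.subtype) (by ext ⟨z, hz⟩; exact hz)
  have hjt : IsShortExact j t := by
    refine ⟨fun s s' h => h₁.injective (congrArg Subtype.val h), fun z => ?_, fun a => ?_⟩
    · rw [← h₂.injective.eq_iff, map_zero, ← LinearMap.comp_apply, ht]
      refine (h₁.exact z).trans ⟨fun ⟨s, hs⟩ => ⟨s, Subtype.ext hs⟩, fun ⟨s, hs⟩ => ⟨s, ?_⟩⟩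
      exact congrArg Subtype.val hs
    · obtain ⟨q, hq⟩ := h₁.surjective (i₂ a)
      refine ⟨⟨q, by simp [K, hq, h₂.exact.apply_apply_eq_zero]⟩, h₂.injective ?_⟩
      rw [← LinearMap.comp_apply, ht]
      exact hq
  refine ⟨⟨⟨K.injective_subtype, LinearMap.exact_subtype_ker_map _,
    h₂.surjective.comp h₁.surjective⟩, fun F _ _ hF φ => ?_⟩, j, t, hjt⟩
  obtain ⟨e₁, he₁⟩ := h₁.extendsFlatMaps F hF (φ ∘ₗ j)
  obtain ⟨θ, hθ⟩ := hjt.exact.exists_descend hjt.surjective (φ - e₁ ∘ₗ K.subtype) (by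
    rw [LinearMap.sub_comp, LinearMap.comp_assoc, show K.subtype ∘ₗ j = i₁ from rfl, he₁,
      sub_self])
  obtain ⟨e₂, rfl⟩ := h₂.extendsFlatMaps F hF θ
  refine ⟨e₁ + e₂ ∘ₗ p₁, ?_⟩
  rw [LinearMap.add_comp, LinearMap.comp_assoc, ← ht, ← LinearMap.comp_assoc, hθ,
    add_sub_cancel]

theorem IsFlatProperShortExact.mkQ_comp {f₁ : X →ₗ[R] E} {q₁ : E →ₗ[R] B} {f₂ : E →ₗ[R] Q}
    {q₂ : Q →ₗ[R] C} (h₁ : IsFlatProperShortExact f₁ q₁) (h₂ : IsFlatProperShortExact f₂ q₂) :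
    IsFlatProperShortExact (f₂ ∘ₗ f₁) (LinearMap.range (f₂ ∘ₗ f₁)).mkQ ∧
      ∃ (u : B →ₗ[R] Q ⧸ LinearMap.range (f₂ ∘ₗ f₁)) (w : (Q ⧸ LinearMap.range (f₂ ∘ₗ f₁)) →ₗ[R] C),
        IsShortExact u w := by
  set S := LinearMap.range (f₂ ∘ₗ f₁)
  refine ⟨⟨⟨h₂.injective.comp h₁.injective, LinearMap.exact_map_mkQ_range _, S.mkQ_surjective⟩,
    h₁.extendsFlatMaps.comp h₂.extendsFlatMaps⟩, ?_⟩
  obtain ⟨u, hu⟩ := h₁.exact.exists_descend h₁.surjective (S.mkQ ∘ₗ f₂) (by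
    ext x; simp [S])
  have hS : S ≤ LinearMap.ker q₂ := by
    rintro _ ⟨x, rfl⟩
    exact h₂.exact.apply_apply_eq_zero _
  refine ⟨u, S.liftQ q₂ hS, ⟨?_, ?_, ?_⟩⟩
  · rw [injective_iff_map_eq_zero]
    intro b hb
    obtain ⟨e, rfl⟩ := h₁.surjective b
    obtain ⟨x, hx⟩ := (Submodule.Quotient.mk_eq_zero S).mp (hb ▸ (LinearMap.congr_fun hu e).symm)
    rw [← h₂.injective hx]
    exact h₁.exact.apply_apply_eq_zero x
  · intro y
    obtain ⟨z, rfl⟩ := S.mkQ_surjective y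
    refine ⟨fun hz => ?_, ?_⟩
    · obtain ⟨e, rfl⟩ := (h₂.exact z).mp hz
      exact ⟨q₁ e, LinearMap.congr_fun hu e⟩
    · rintro ⟨b, hb⟩
      obtain ⟨e, rfl⟩ := h₁.surjective b
      rw [← hb, ← LinearMap.comp_apply u, hu]
      exact h₂.exact.apply_apply_eq_zero e
  · exact LinearMap.surjective_range_liftQ _ h₂.surjective

end Composites

section Horseshoe

variable {R : Type u} [Ring R] {A B N Q X Z : Type u} [AddCommGroup A] [Module R A]
  [AddCommGroup B] [Module R B] [AddCommGroup N] [Module R N] [AddCommGroup Q] [Module R Q]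
  [AddCommGroup X] [Module R X] [AddCommGroup Z] [Module R Z]
theorem IsFlatProperShortExact.prodMap_id {i : Z →ₗ[R] Q} {p : Q →ₗ[R] A}
    (h : IsFlatProperShortExact i p) (N : Type u) [AddCommGroup N] [Module R N] :
    IsFlatProperShortExact (LinearMap.inl R Q N ∘ₗ i) (p.prodMap (LinearMap.id : N →ₗ[R] N)) := by
  refine ⟨⟨LinearMap.inl_injective.comp h.injective, ?_, ?_⟩, fun F _ _ hF φ => ?_⟩
  · rintro ⟨q, n⟩
    simp only [LinearMap.prodMap_apply, LinearMap.id_apply, Prod.mk_eq_zero, Set.mem_range,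
      LinearMap.comp_apply, LinearMap.inl_apply, Prod.mk.injEq]
    rw [h.exact q]
    exact ⟨fun ⟨⟨z, hz⟩, hn⟩ => ⟨z, hz, hn.symm⟩, fun ⟨z, hz, hn⟩ => ⟨⟨z, hz⟩, hn.symm⟩⟩
  · exact Prod.map_surjective.mpr ⟨h.surjective, Function.surjective_id⟩
  · obtain ⟨e, rfl⟩ := h.extendsFlatMaps F hF φ
    exact ⟨e ∘ₗ LinearMap.fst R Q N, rfl⟩

theorem IsFlatProperShortExact.id_prodMap {i : B →ₗ[R] Q} {p : Q →ₗ[R] N}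
    (h : IsFlatProperShortExact i p) (M : Type u) [AddCommGroup M] [Module R M] :
    IsFlatProperShortExact ((LinearMap.id : M →ₗ[R] M).prodMap i) (p ∘ₗ LinearMap.snd R M Q) := by
  refine ⟨⟨Prod.map_injective.mpr ⟨Function.injective_id, h.injective⟩, ?_, ?_⟩,
    fun F _ _ hF φ => ?_⟩
  · rintro ⟨m, q⟩
    simp only [LinearMap.comp_apply, LinearMap.snd_apply, Set.mem_range, LinearMap.prodMap_apply,
      LinearMap.id_apply, Prod.mk.injEq, Prod.exists]
    rw [h.exact q]
    exact ⟨fun ⟨b, hb⟩ => ⟨m, b, rfl, hb⟩, fun ⟨_, b, _, hb⟩ => ⟨b, hb⟩⟩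
  · exact h.surjective.comp Prod.snd_surjective
  · obtain ⟨e, he⟩ := h.extendsFlatMaps F hF (φ ∘ₗ LinearMap.inr R M B)
    refine ⟨(φ ∘ₗ LinearMap.inl R M B).coprod e, LinearMap.prod_ext ?_ ?_⟩
    · ext m
      simp
    · ext b
      simpa [← Prod.zero_eq_mk] using LinearMap.congr_fun he b

/-- The map `A × Q → X` of the horseshoe lemma, built from a lift `σ` of `p : Q ↠ B`. -/
theorem IsFlatProperShortExact.coprod_of_comp_eq {k : A →ₗ[R] X} {r : X →ₗ[R] B}
    {i : Z →ₗ[R] Q} {p : Q →ₗ[R] B} (hkr : IsShortExact k r) (h : IsFlatProperShortExact i p)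
    (σ : Q →ₗ[R] X) (hσ : r ∘ₗ σ = p) :
    ∃ a : Z →ₗ[R] A, IsFlatProperShortExact (a.prod i) (k.coprod σ) := by
  obtain ⟨a, ha⟩ := hkr.exact.exists_lift hkr.injective (-(σ ∘ₗ i)) (by
    rw [LinearMap.comp_neg, ← LinearMap.comp_assoc, hσ, h.exact.linearMap_comp_eq_zero, neg_zero])
  have ha' : ∀ z, k (a z) = -σ (i z) := fun z => LinearMap.congr_fun ha z
  refine ⟨a, ⟨⟨fun z z' hz => h.injective (congrArg Prod.snd hz), ?_, fun x => ?_⟩,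
    fun F _ _ hF φ => ?_⟩⟩
  · rintro ⟨x, q⟩
    change k x + σ q = 0 ↔ ∃ z, (a z, i z) = (x, q)
    refine ⟨fun hxq => ?_, fun ⟨z, hz⟩ => ?_⟩
    · have hrσ : r (σ q) = 0 := by
        rw [eq_neg_of_add_eq_zero_right hxq, map_neg, hkr.exact.apply_apply_eq_zero, neg_zero]
      obtain ⟨z, rfl⟩ := (h.exact q).mp (by rw [← hσ]; exact hrσ)
      exact ⟨z, Prod.ext (hkr.injective (by rw [ha', eq_neg_of_add_eq_zero_left hxq])) rfl⟩
    · obtain ⟨rfl, rfl⟩ := Prod.mk.inj hz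
      rw [ha', neg_add_cancel]
  · obtain ⟨q, hq⟩ := h.surjective (r x)
    obtain ⟨y, hy⟩ := (hkr.exact (x - σ q)).mp (by
      rw [map_sub, ← LinearMap.comp_apply r σ, hσ, hq, sub_self])
    exact ⟨(y, q), by simp [hy]⟩
  · obtain ⟨e, rfl⟩ := h.extendsFlatMaps F hF φ
    exact ⟨e ∘ₗ LinearMap.snd R A Q, rfl⟩

/-- The map `X → Q × B` of the dual horseshoe lemma, built from an extension `g` of `j : A ↪ Q`. -/
theorem IsFlatProperShortExact.prod_of_comp_eq {k : A →ₗ[R] X} {r : X →ₗ[R] B}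
    {j : A →ₗ[R] Q} {q : Q →ₗ[R] N} (hkr : IsShortExact k r) (h : IsFlatProperShortExact j q)
    (g : X →ₗ[R] Q) (hg : g ∘ₗ k = j) :
    ∃ c : Q × B →ₗ[R] N, IsFlatProperShortExact (g.prod r) c := by
  obtain ⟨ν, hν⟩ := hkr.exact.exists_descend hkr.surjective (q ∘ₗ g) (by
    rw [LinearMap.comp_assoc, hg, h.exact.linearMap_comp_eq_zero])
  have hν' : ∀ x, ν (r x) = q (g x) := fun x => LinearMap.congr_fun hν x
  have hg' : ∀ a, g (k a) = j a := fun a => LinearMap.congr_fun hg a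
  refine ⟨q.coprod (-ν), ⟨⟨?_, ?_, fun n => ?_⟩, fun F _ _ hF φ => ?_⟩⟩
  · rw [injective_iff_map_eq_zero]
    intro x hx
    obtain ⟨a, rfl⟩ := (hkr.exact x).mp (congrArg Prod.snd hx)
    have hja : j a = 0 := by rw [← hg']; exact congrArg Prod.fst hx
    rw [show a = 0 from h.injective (by rw [hja, map_zero]), map_zero]
  · rintro ⟨y, b⟩
    obtain ⟨x, rfl⟩ := hkr.surjective b
    change q y + -ν (r x) = 0 ↔ ∃ x', (g x', r x') = (y, r x)
    rw [hν', add_neg_eq_zero]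
    refine ⟨fun hy => ?_, fun ⟨x', hx'⟩ => ?_⟩
    · obtain ⟨a, ha⟩ := (h.exact (y - g x)).mp (by rw [map_sub, hy, sub_self])
      refine ⟨x + k a, Prod.ext ?_ ?_⟩
      · change g (x + k a) = y
        rw [map_add, hg', ha, add_sub_cancel]
      · change r (x + k a) = r x
        rw [map_add, hkr.exact.apply_apply_eq_zero, add_zero]
    · obtain ⟨rfl, hr⟩ := Prod.mk.inj hx'
      rw [← hν', ← hν', hr]
  · obtain ⟨y, rfl⟩ := h.surjective n
    exact ⟨(y, 0), by simp⟩
  · obtain ⟨e, he⟩ := h.extendsFlatMaps F hF (φ ∘ₗ k)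
    obtain ⟨θ, hθ⟩ := hkr.exact.exists_descend hkr.surjective (φ - e ∘ₗ g) (by
      rw [LinearMap.sub_comp, LinearMap.comp_assoc, hg, he, sub_self])
    refine ⟨e.coprod θ, ?_⟩
    ext x
    simp [LinearMap.congr_fun hθ x]

end Horseshoe

section CompleteResolutions

variable {R : Type u} [Ring R]

structure ProperPresentation (CP G : ModuleCat.{u} R → Prop) (X : ModuleCat.{u} R) where
  Q : ModuleCat.{u} R
  Z : ModuleCat.{u} R
  i : (Z : Type u) →ₗ[R] Q
  p : (Q : Type u) →ₗ[R] X
  mem_Q : CP Q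
  mem_Z : G Z
  isFlatProperShortExact : IsFlatProperShortExact i p

structure ProperCopresentation (CP G : ModuleCat.{u} R → Prop) (X : ModuleCat.{u} R) where
  Q : ModuleCat.{u} R
  Z : ModuleCat.{u} R
  i : (X : Type u) →ₗ[R] Q
  p : (Q : Type u) →ₗ[R] Z
  mem_Q : CP Q
  mem_Z : G Z
  isFlatProperShortExact : IsFlatProperShortExact i p

/-- `X` is a cycle module of a `Hom_R(-, flat)`-exact exact complex of `CP`-modules, expressed
through a class `G` of such cycles stable under taking proper (co)presentations. -/
def HasCompleteResolution (CP : ModuleCat.{u} R → Prop) (X : ModuleCat.{u} R) : Prop :=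
  ∃ G : ModuleCat.{u} R → Prop, G X ∧
    ∀ Y, G Y → Nonempty (ProperPresentation CP G Y) ∧ Nonempty (ProperCopresentation CP G Y)

namespace HasCompleteResolution

variable {CP CP' : ModuleCat.{u} R → Prop} {X : ModuleCat.{u} R}

theorem presentation (h : HasCompleteResolution CP X) :
    Nonempty (ProperPresentation CP (HasCompleteResolution CP) X) := by
  obtain ⟨G, hX, hG⟩ := h
  obtain ⟨c⟩ := (hG X hX).1
  exact ⟨{ c with mem_Z := ⟨G, c.mem_Z, hG⟩ }⟩

theorem copresentation (h : HasCompleteResolution CP X) :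
    Nonempty (ProperCopresentation CP (HasCompleteResolution CP) X) := by
  obtain ⟨G, hX, hG⟩ := h
  obtain ⟨c⟩ := (hG X hX).2
  exact ⟨{ c with mem_Z := ⟨G, c.mem_Z, hG⟩ }⟩

theorem mono (h : HasCompleteResolution CP X) (hCP : ∀ Q, CP Q → CP' Q) :
    HasCompleteResolution CP' X := by
  obtain ⟨G, hX, hG⟩ := h
  refine ⟨G, hX, fun Y hY => ⟨?_, ?_⟩⟩
  · obtain ⟨c⟩ := (hG Y hY).1
    exact ⟨{ c with mem_Q := hCP _ c.mem_Q }⟩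
  · obtain ⟨c⟩ := (hG Y hY).2
    exact ⟨{ c with mem_Q := hCP _ c.mem_Q }⟩

theorem extOneFlatVanishes (h : HasCompleteResolution CP X)
    (hCP : ∀ Q, CP Q → ExtOneFlatVanishes R Q) : ExtOneFlatVanishes R X := by
  obtain ⟨c⟩ := h.presentation
  exact .of_isFlatProperShortExact c.isFlatProperShortExact (hCP _ c.mem_Q)

end HasCompleteResolution

section Complex

variable {CP : ModuleCat.{u} R → Prop} (P : ℤ → ModuleCat.{u} R)
  (d : ∀ n : ℤ, (P (n + 1) : Type u) →ₗ[R] P n) (hex : ∀ n, Function.Exact (d (n + 1)) (d n))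
  (hhom : ∀ (F : Type u) [AddCommGroup F] [Module R F], IsFlatModule R F →
    ∀ n : ℤ, Function.Exact (fun g : (P n : Type u) →ₗ[R] F => g ∘ₗ d n)
      (fun g : (P (n + 1) : Type u) →ₗ[R] F => g ∘ₗ d (n + 1)))
include hex hhom

theorem isFlatProperShortExact_range (n : ℤ) :
    IsFlatProperShortExact (LinearMap.range (d (n + 1))).subtype (d n).rangeRestrict := by
  refine ⟨⟨Submodule.injective_subtype _, ?_, LinearMap.surjective_rangeRestrict _⟩, ?_⟩
  · rw [LinearMap.exact_iff, LinearMap.ker_rangeRestrict, Submodule.range_subtype]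
    exact (hex n).linearMap_ker_eq
  · intro F _ _ hF φ
    have hψ : (φ ∘ₗ (d (n + 1)).rangeRestrict) ∘ₗ d (n + 1 + 1) = 0 := by
      ext x
      have h0 : (d (n + 1)).rangeRestrict (d (n + 1 + 1) x) = 0 :=
        Subtype.ext ((hex (n + 1)).apply_apply_eq_zero x)
      simp [h0]
    obtain ⟨h, hh⟩ := (hhom F hF (n + 1) _).mp hψ
    refine ⟨h, ?_⟩
    ext ⟨_, x, rfl⟩
    exact LinearMap.congr_fun hh x

theorem hasCompleteResolution_of_complex (hCP : ∀ n, CP (P n)) (X : ModuleCat.{u} R)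
    (e : (X : Type u) ≃ₗ[R] LinearMap.ker (d (-1))) : HasCompleteResolution CP X := by
  refine ⟨fun Z => ∃ n, Nonempty ((Z : Type u) ≃ₗ[R] LinearMap.range (d n)),
    ⟨-1 + 1, ⟨e.trans (LinearEquiv.ofEq _ _ (hex (-1)).linearMap_ker_eq)⟩⟩, ?_⟩
  rintro Y ⟨n, ⟨e⟩⟩
  refine ⟨⟨⟨P (n + 1), .of R (LinearMap.range (d (n + 1))), _, _, hCP _,
    ⟨n + 1, ⟨LinearEquiv.refl _ _⟩⟩,
    (isFlatProperShortExact_range P d hex hhom n).comp_linearEquiv e.symm⟩⟩, ?_⟩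
  obtain ⟨m, rfl⟩ : ∃ m, n = m + 1 := ⟨n - 1, by omega⟩
  exact ⟨⟨P (m + 1), .of R (LinearMap.range (d m)), _, _, hCP _, ⟨m, ⟨LinearEquiv.refl _ _⟩⟩,
    (isFlatProperShortExact_range P d hex hhom m).linearEquiv_comp e⟩⟩

end Complex

theorem IsDingProjective.hasCompleteResolution {M : Type u} [AddCommGroup M] [Module R M]
    (h : IsDingProjective R M) :
    HasCompleteResolution (fun Q => Module.Projective R Q) (.of R M) := by
  obtain ⟨P, d, hP, hex, hhom, ⟨e⟩⟩ := h
  exact hasCompleteResolution_of_complex P d hex hhom hP _ e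

theorem IsDingProjective.extOneFlatVanishes {M : Type u} [AddCommGroup M] [Module R M]
    (h : IsDingProjective R M) : ExtOneFlatVanishes R M :=
  h.hasCompleteResolution.extOneFlatVanishes fun _ hQ =>
    haveI := hQ
    extOneFlatVanishes_of_projective

end CompleteResolutions

section Splice

variable {R : Type u} [Ring R]

theorem isDingProjective_of_splice (K P : ℤ → ModuleCat.{u} R)
    (i : ∀ n, (K n : Type u) →ₗ[R] P n) (p : ∀ n, (P (n + 1) : Type u) →ₗ[R] K n)
    (hP : ∀ n, Module.Projective R (P n))
    (hses : ∀ n, IsFlatProperShortExact (i (n + 1)) (p n)) : IsDingProjective R (K 0) := by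
  have hi : ∀ n, Function.Injective (i n) ∧ ExtendsFlatMaps (i n) := fun n => by
    obtain ⟨m, rfl⟩ : ∃ m, n = m + 1 := ⟨n - 1, by omega⟩
    exact ⟨(hses m).injective, (hses m).extendsFlatMaps⟩
  refine ⟨P, fun n => i n ∘ₗ p n, hP, fun n => ?_, fun F _ _ hF n => ?_, ⟨?_⟩⟩
  · rw [(hses (n + 1)).surjective.comp_exact_iff_exact, (hi n).1.comp_exact_iff_exact]
    exact (hses n).exact
  · intro ψ
    refine ⟨fun hψ => ?_, ?_⟩
    · have hψi : ψ ∘ₗ i (n + 1) = 0 := by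
        rw [← LinearMap.cancel_right (hses (n + 1)).surjective, LinearMap.zero_comp]
        exact hψ
      obtain ⟨θ, rfl⟩ := (hses n).exact.exists_descend (hses n).surjective ψ hψi
      obtain ⟨h, rfl⟩ := (hi n).2 F hF θ
      exact ⟨h, rfl⟩
    · rintro ⟨h, rfl⟩
      change h ∘ₗ i n ∘ₗ (p n ∘ₗ i (n + 1)) ∘ₗ p (n + 1) = 0
      simp only [(hses n).exact.linearMap_comp_eq_zero, LinearMap.zero_comp, LinearMap.comp_zero]
  · refine (LinearEquiv.ofInjective (i (-1 + 1)) (hi _).1).trans (LinearEquiv.ofEq _ _ ?_)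
    rw [LinearMap.ker_comp_of_ker_eq_bot _ (LinearMap.ker_eq_bot.mpr (hi (-1)).1)]
    exact (hses (-1)).exact.linearMap_ker_eq.symm

variable {CP G : ModuleCat.{u} R → Prop} (pres : ∀ Y : {Y // G Y}, ProperPresentation CP G Y)
  (copres : ∀ Y : {Y // G Y}, ProperCopresentation CP G Y) {X : ModuleCat.{u} R} (hX : G X)

noncomputable def syzygyChain : ℕ → {Y // G Y}
  | 0 => ⟨X, hX⟩
  | n + 1 => ⟨_, (pres (syzygyChain n)).mem_Z⟩

noncomputable def cosyzygyChain : ℕ → {Y // G Y}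
  | 0 => ⟨X, hX⟩
  | n + 1 => ⟨_, (copres (cosyzygyChain n)).mem_Z⟩

/- The cycles in degrees `n ≥ 0` are the iterated syzygies of `X`, those in degree `-(n + 1)` its
`(n + 1)`-st cosyzygy; the differential `P (n + 1) → P n` factors through the cycle `K n`. -/
noncomputable def spliceCycles : ℤ → ModuleCat.{u} R
  | .ofNat n => syzygyChain pres hX n
  | .negSucc n => cosyzygyChain copres hX (n + 1)

noncomputable def spliceTerms : ℤ → ModuleCat.{u} R
  | .ofNat 0 => (copres (cosyzygyChain copres hX 0)).Q
  | .ofNat (n + 1) => (pres (syzygyChain pres hX n)).Q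
  | .negSucc n => (copres (cosyzygyChain copres hX (n + 1))).Q

noncomputable def spliceInclusion :
    ∀ n, (spliceCycles pres copres hX n : Type u) →ₗ[R] spliceTerms pres copres hX n
  | .ofNat 0 => (copres (cosyzygyChain copres hX 0)).i
  | .ofNat (n + 1) => (pres (syzygyChain pres hX n)).i
  | .negSucc n => (copres (cosyzygyChain copres hX (n + 1))).i

noncomputable def spliceProjection :
    ∀ n, (spliceTerms pres copres hX (n + 1) : Type u) →ₗ[R] spliceCycles pres copres hX n
  | .ofNat n => (pres (syzygyChain pres hX n)).p
  | .negSucc 0 => (copres (cosyzygyChain copres hX 0)).p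
  | .negSucc (n + 1) => (copres (cosyzygyChain copres hX (n + 1))).p

end Splice

theorem HasCompleteResolution.isDingProjective {R : Type u} [Ring R] {X : ModuleCat.{u} R}
    (h : HasCompleteResolution (fun Q => Module.Projective R Q) X) : IsDingProjective R X := by
  obtain ⟨G, hX, hG⟩ := h
  let pres := fun Y : {Y // G Y} => (hG Y Y.2).1.some
  let copres := fun Y : {Y // G Y} => (hG Y Y.2).2.some
  refine isDingProjective_of_splice (spliceCycles pres copres hX) (spliceTerms pres copres hX)
    (spliceInclusion pres copres hX) (spliceProjection pres copres hX) ?_ ?_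
  · rintro ((_ | n) | n)
    exacts [(copres _).mem_Q, (pres _).mem_Q, (copres _).mem_Q]
  · rintro (n | (_ | n))
    exacts [(pres _).isFlatProperShortExact, (copres _).isFlatProperShortExact,
      (copres _).isFlatProperShortExact]

section ExtensionClosure

variable {R : Type u} [Ring R]

inductive ExtensionClosure (C : ModuleCat.{u} R → Prop) : ModuleCat.{u} R → Prop
  | of {X : ModuleCat.{u} R} : C X → ExtensionClosure C X
  | ext {A X B : ModuleCat.{u} R} (k : (A : Type u) →ₗ[R] X) (r : (X : Type u) →ₗ[R] B) :
      IsShortExact k r → ExtensionClosure C A → ExtensionClosure C B → ExtensionClosure C X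

namespace ExtensionClosure

variable {C : ModuleCat.{u} R → Prop} {A X B : ModuleCat.{u} R}
  {k : (A : Type u) →ₗ[R] X} {r : (X : Type u) →ₗ[R] B}

theorem extOneFlatVanishes (hC : ∀ X, C X → ExtOneFlatVanishes R X)
    (h : ExtensionClosure C X) : ExtOneFlatVanishes R X := by
  induction h with
  | of hX => exact hC _ hX
  | ext k r hkr _ _ hA hB => exact .of_isShortExact hkr hA hB

/-- Horseshoe lemma, through the factorisation `Q_A × Q_B ↠ A × Q_B ↠ X`. -/
theorem projectivePresentation_of_isShortExact (hkr : IsShortExact k r)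
    (cA : ProperPresentation (fun Q => Module.Projective R Q) (ExtensionClosure C) A)
    (cB : ProperPresentation (fun Q => Module.Projective R Q) (ExtensionClosure C) B) :
    Nonempty (ProperPresentation (fun Q => Module.Projective R Q) (ExtensionClosure C) X) := by
  have := cA.mem_Q
  have := cB.mem_Q
  obtain ⟨σ, hσ⟩ := Module.projective_lifting_property r cB.p hkr.surjective
  obtain ⟨a, hB⟩ := IsFlatProperShortExact.coprod_of_comp_eq hkr cB.isFlatProperShortExact σ hσ
  obtain ⟨hQ, j, t, hjt⟩ := (cA.isFlatProperShortExact.prodMap_id cB.Q).ker_comp hB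
  exact ⟨⟨.of R (cA.Q × cB.Q), .of R (LinearMap.ker _), _, _,
    inferInstanceAs (Module.Projective R (cA.Q × cB.Q)), .ext j t hjt cA.mem_Z cB.mem_Z, hQ⟩⟩

/-- Dual horseshoe lemma, through the factorisation `X ↪ Q_A × B ↪ Q_A × Q_B`; the first map
needs `Ext¹(B, Q_A) = 0`. -/
theorem projectiveCopresentation_of_isShortExact (hkr : IsShortExact k r)
    (hB : ExtOneFlatVanishes R B)
    (cA : ProperCopresentation (fun Q => Module.Projective R Q) (ExtensionClosure C) A)
    (cB : ProperCopresentation (fun Q => Module.Projective R Q) (ExtensionClosure C) B) :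
    Nonempty (ProperCopresentation (fun Q => Module.Projective R Q) (ExtensionClosure C) X) := by
  have := cA.mem_Q
  have := cB.mem_Q
  obtain ⟨g, hg⟩ := hB _ _ k r hkr cA.Q isFlatModule_of_projective cA.i
  obtain ⟨c, hA⟩ := IsFlatProperShortExact.prod_of_comp_eq hkr cA.isFlatProperShortExact g hg
  obtain ⟨hQ, u, w, huw⟩ := hA.mkQ_comp (cB.isFlatProperShortExact.id_prodMap cA.Q)
  exact ⟨⟨.of R (cA.Q × cB.Q), .of R (_ ⧸ LinearMap.range (LinearMap.id.prodMap cB.i ∘ₗ g.prod r)),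
    _, _, inferInstanceAs (Module.Projective R (cA.Q × cB.Q)), .ext u w huw cA.mem_Z cB.mem_Z, hQ⟩⟩

end ExtensionClosure

variable {X : ModuleCat.{u} R}

/-- Composing the proper cover of `X` by a Ding projective `E` with a proper projective cover of
`E` gives a kernel that is an extension of two cycles. -/
theorem HasCompleteResolution.projectivePresentation
    (h : HasCompleteResolution (fun Q => IsDingProjective R Q) X) :
    Nonempty (ProperPresentation (fun Q => Module.Projective R Q)
      (ExtensionClosure (HasCompleteResolution fun Q => IsDingProjective R Q)) X) := by
  obtain ⟨c⟩ := h.presentation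
  obtain ⟨c'⟩ := (c.mem_Q : IsDingProjective R c.Q).hasCompleteResolution.presentation
  obtain ⟨hQ, j, t, hjt⟩ := c'.isFlatProperShortExact.ker_comp c.isFlatProperShortExact
  refine ⟨⟨c'.Q, .of R (LinearMap.ker _), _, _, c'.mem_Q, .ext j t hjt (.of ?_) (.of c.mem_Z), hQ⟩⟩
  exact c'.mem_Z.mono fun Q hQ => haveI := hQ; isDingProjective_of_projective Q

theorem HasCompleteResolution.projectiveCopresentation
    (h : HasCompleteResolution (fun Q => IsDingProjective R Q) X) :
    Nonempty (ProperCopresentation (fun Q => Module.Projective R Q)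
      (ExtensionClosure (HasCompleteResolution fun Q => IsDingProjective R Q)) X) := by
  obtain ⟨c⟩ := h.copresentation
  obtain ⟨c'⟩ := (c.mem_Q : IsDingProjective R c.Q).hasCompleteResolution.copresentation
  obtain ⟨hQ, u, w, huw⟩ := c.isFlatProperShortExact.mkQ_comp c'.isFlatProperShortExact
  refine ⟨⟨c'.Q, .of R (_ ⧸ _), _, _, c'.mem_Q, .ext u w huw (.of c.mem_Z) (.of ?_), hQ⟩⟩
  exact c'.mem_Z.mono fun Q hQ => haveI := hQ; isDingProjective_of_projective Q

namespace ExtensionClosure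

variable (h : ExtensionClosure (HasCompleteResolution fun Q => IsDingProjective R Q) X)
include h

theorem projectivePresentation :
    Nonempty (ProperPresentation (fun Q => Module.Projective R Q)
      (ExtensionClosure (HasCompleteResolution fun Q => IsDingProjective R Q)) X) := by
  induction h with
  | of hX => exact hX.projectivePresentation
  | ext k r hkr _ _ hA hB => exact projectivePresentation_of_isShortExact hkr hA.some hB.some

theorem projectiveCopresentation :
    Nonempty (ProperCopresentation (fun Q => Module.Projective R Q)
      (ExtensionClosure (HasCompleteResolution fun Q => IsDingProjective R Q)) X) := by
  induction h with
  | of hX => exact hX.projectiveCopresentation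
  | ext k r hkr _ hB hA' hB' =>
    refine projectiveCopresentation_of_isShortExact hkr ?_ hA'.some hB'.some
    exact hB.extOneFlatVanishes fun _ hY =>
      hY.extOneFlatVanishes fun _ hQ => IsDingProjective.extOneFlatVanishes hQ

theorem hasCompleteResolution : HasCompleteResolution (fun Q => Module.Projective R Q) X :=
  ⟨_, h, fun _ hY => ⟨hY.projectivePresentation, hY.projectiveCopresentation⟩⟩

end ExtensionClosure

theorem IsTwoDegreeDingProjective.isDingProjective {M : Type u} [AddCommGroup M] [Module R M]
    (h : IsTwoDegreeDingProjective R M) : IsDingProjective R M := by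
  obtain ⟨D, d, hD, hex, hhom, ⟨e⟩⟩ := h
  exact (ExtensionClosure.of (hasCompleteResolution_of_complex D d hex hhom hD (.of R M) e)
    ).hasCompleteResolution.isDingProjective

end ExtensionClosure

/-- A left `R`-module `M` is Ding projective iff it admits an exact
sequence of Ding projective modules, with `M` the kernel of the middle map, which stays
exact under `Hom_R(-, H)` for every Gorenstein flat module `H`. -/
theorem ding_projective_iff_sequence_hom_gorenstein_flat_exact (R : Type u) [Ring R]
    (M : Type u) [AddCommGroup M] [Module R M] :
    IsDingProjective R M ↔
      ∃ (D : ℤ → ModuleCat.{u} R) (d : ∀ n : ℤ, (D (n + 1) : Type u) →ₗ[R] D n),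
        (∀ n, IsDingProjective R (D n)) ∧
        (∀ n, Function.Exact (d (n + 1)) (d n)) ∧
        (∀ (H : Type u) [AddCommGroup H] [Module R H], IsGorensteinFlat R H →
          ∀ n : ℤ, Function.Exact
            (fun g : (D n : Type u) →ₗ[R] H => g ∘ₗ d n)
            (fun g : (D (n + 1) : Type u) →ₗ[R] H => g ∘ₗ d (n + 1))) ∧
        Nonempty (M ≃ₗ[R] LinearMap.ker (d (-1))) := by
  refine ⟨fun hM => ?_, fun ⟨D, d, hD, hex, hhom, he⟩ => ?_⟩
  · exact ⟨fun _ => .of R M, alternatingDiff R M, fun _ => hM, alternatingDiff_exact,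
      fun H _ _ _ => alternatingDiff_comp_exact H, ⟨equivKerAlternatingDiff⟩⟩
  · exact IsTwoDegreeDingProjective.isDingProjective
      ⟨D, d, hD, hex, fun F _ _ hF => hhom F (isGorensteinFlat_of_isFlatModule F hF), he⟩
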